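/- arXiv:1908.04949 — 5 statements merged into one kernel-verified Lean document; each statement's English description precedes it below -/
import Mathlib

section
/- The equivariant topological complexity is not invariant under Morita equivalence: for the free rotation action of S¹ on itself, TC_{S¹}(S¹) ≥ TC(S¹) = 2, while the trivial action on the one-point quotient S¹/S¹ has TC equal to 1, even though these two actions are Morita equivalent. -/
open Set MulAction Function


/-- `ψ ⋉ ε : G ⋉ X → H ⋉ Y` is an essential equivalence of translation groupoids:
an equivariant map which is essentially surjective (the map `X × H → Y`,
`(x, h) ↦ h • ε x`, is an open surjection) and fully faithful (the canonical map
`G × X → P` to the pullback is a homeomorphism). -/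
def IsEssentialEquivalence {G H X Y : Type*} [Group G] [Group H]
    [TopologicalSpace G] [TopologicalSpace H] [TopologicalSpace X] [TopologicalSpace Y]
    [MulAction G X] [MulAction H Y] (ψ : G →* H) (ε : X → Y) : Prop :=
  Continuous ψ ∧ Continuous ε ∧
  (∀ (g : G) (x : X), ε (g • x) = ψ g • ε x) ∧
  Function.Surjective (fun p : X × H => p.2 • ε p.1) ∧
  IsOpenMap (fun p : X × H => p.2 • ε p.1) ∧
  ∃ e : (G × X) ≃ₜ {q : (H × Y) × (X × X) // ε q.2.1 = q.1.2 ∧ ε q.2.2 = q.1.1 • q.1.2},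
    ∀ (g : G) (x : X), ((e (g, x)) : (H × Y) × (X × X)) = ((ψ g, ε x), (x, g • x))

universe u

/-- A continuous action of a topological group on a space, i.e. the data of a
translation groupoid `G ⋉ X`. -/
structure TopAction : Type (u + 1) where
  group : Type u
  carrier : Type u
  [instGroup : Group group]
  [instTopGroup : TopologicalSpace group]
  [instTopGroupGrp : IsTopologicalGroup group]
  [instTopCarrier : TopologicalSpace carrier]
  [instAction : MulAction group carrier]
  continuous_smul : Continuous fun p : group × carrier => p.1 • p.2

attribute [instance] TopAction.instGroup TopAction.instTopGroup TopAction.instTopGroupGrp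
  TopAction.instTopCarrier TopAction.instAction

/-- There is an essential equivalence from `A` to `B`. -/
def TopAction.EssEquivTo (A B : TopAction.{u}) : Prop :=
  ∃ (ψ : A.group →* B.group) (ε : A.carrier → B.carrier), IsEssentialEquivalence ψ ε

/-- Morita equivalence of two translation groupoids. -/
def MoritaEquivalent (A B : TopAction.{u}) : Prop :=
  ∃ C : TopAction.{u}, C.EssEquivTo A ∧ C.EssEquivTo B

/-- `X × X` is covered by `k` `G`-invariant open sets, each admitting a `G`-equivariant
motion planner (section of the free path fibration). -/
def eqvTCCover (G : Type*) (X : Type*) [Group G] [MulAction G X] [TopologicalSpace X]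
    (k : ℕ) : Prop :=
  ∃ U : Fin k → Set (X × X), (⋃ i, U i) = Set.univ ∧
    ∀ i, IsOpen (U i) ∧
      (∀ g : G, ∀ p ∈ U i, (g • p.1, g • p.2) ∈ U i) ∧
      ∃ s : X × X → C(unitInterval, X),
        ContinuousOn s (U i) ∧
        (∀ p ∈ U i, s p 0 = p.1 ∧ s p 1 = p.2) ∧
        (∀ g : G, ∀ p ∈ U i, ∀ t, s (g • p.1, g • p.2) t = g • s p t)

/-- The equivariant topological complexity of Colman–Grant. -/
noncomputable def eqvTC (G : Type*) (X : Type*) [Group G] [MulAction G X]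
    [TopologicalSpace X] : ℕ∞ :=
  sInf {k : ℕ∞ | ∃ n : ℕ, k = n ∧ eqvTCCover G X n}

/-- `X × X` is covered by `k` open sets each admitting a motion planner. -/
def TCCover (X : Type*) [TopologicalSpace X] (k : ℕ) : Prop :=
  ∃ U : Fin k → Set (X × X), (⋃ i, U i) = Set.univ ∧
    ∀ i, IsOpen (U i) ∧
      ∃ s : X × X → C(unitInterval, X),
        ContinuousOn s (U i) ∧ (∀ p ∈ U i, s p 0 = p.1 ∧ s p 1 = p.2)

/-- Farber's topological complexity. -/
noncomputable def FarberTC (X : Type*) [TopologicalSpace X] : ℕ∞ :=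
  sInf {k : ℕ∞ | ∃ n : ℕ, k = n ∧ TCCover X n}

/-- The trivial action of the trivial subgroup of the circle on the orbit space
`S¹/S¹`. -/
instance trivialQuotAction :
    MulAction (↥(⊥ : Subgroup Circle)) (Quotient (MulAction.orbitRel Circle Circle)) where
  smul _ q := q
  one_smul _ := rfl
  mul_smul _ _ _ := rfl


open Set Complex unitInterval

noncomputable section
namespace S10

lemma abs_min_sub_min (c a b : ℝ) : |min a c - min b c| ≤ |a - b| := by
  calc |min a c - min b c| ≤ max |a - b| |c - c| := abs_min_sub_min_le_max a c b c
  _ = |a - b| := by simp [abs_nonneg]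

/-- the clamp to `[0,1]` -/
def cl (r : ℝ) : unitInterval := Set.projIcc (0:ℝ) 1 zero_le_one r

lemma cl_lip (a b : ℝ) : |((cl a : ℝ)) - (cl b : ℝ)| ≤ |a - b| := by
  simp only [cl, Set.coe_projIcc]
  rw [max_comm 0 (min 1 a), max_comm 0 (min 1 b)]
  calc |max (min 1 a) 0 - max (min 1 b) 0| ≤ |min 1 a - min 1 b| :=
        abs_max_sub_max_le_abs _ _ _
  _ = |min a 1 - min b 1| := by rw [min_comm 1 a, min_comm 1 b]
  _ ≤ |a - b| := abs_min_sub_min 1 a b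

lemma cl_coe (t : unitInterval) : cl (t : ℝ) = t := Set.projIcc_val zero_le_one t

lemma cl_one : cl 1 = 1 := by
  have := cl_coe (1 : unitInterval); simpa using this

lemma cl_zero : cl 0 = 0 := by
  have := cl_coe (0 : unitInterval); simpa using this

lemma ratio_mem_slitPlane {a b : Circle} (h : dist a b < 2) :
    ((a / b : Circle) : ℂ) ∈ Complex.slitPlane := by
  by_contra hns
  rw [Complex.mem_slitPlane_iff] at hns
  push_neg at hns
  obtain ⟨h1, h2⟩ := hns
  have habs : ‖((a / b : Circle) : ℂ)‖ = 1 := Circle.norm_coe _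
  have hz : ((a / b : Circle) : ℂ) = -1 := by
    have him : ((a / b : Circle) : ℂ) = (((a / b : Circle) : ℂ).re : ℂ) := by
      apply Complex.ext <;> simp [← Circle.coe_div, h2]
    rw [him] at habs ⊢
    rw [Complex.norm_real, Real.norm_eq_abs] at habs
    have : ((a / b : Circle) : ℂ).re = -1 := by
      rcases abs_cases ((a / b : Circle) : ℂ).re with ⟨h3, _⟩ | ⟨h3, _⟩ <;> linarith
    rw [this]; norm_num
  have hab : (a : ℂ) = -(b : ℂ) := by
    have hb : (b : ℂ) ≠ 0 := Circle.coe_ne_zero b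
    have : (a : ℂ) / (b : ℂ) = -1 := by rw [← Circle.coe_div]; exact hz
    have h4 : (a:ℂ) = -1 * (b:ℂ) := (div_eq_iff hb).1 this
    linear_combination h4
  have : dist a b = 2 := by
    have : dist (a : ℂ) (b : ℂ) = 2 := by
      rw [Complex.dist_eq, hab]
      have : -(b:ℂ) - b = -(2 * b) := by ring
      rw [this, norm_neg, norm_mul]
      simp [Circle.norm_coe]
    change dist (a : ℂ) (b : ℂ) = 2
    exact this
  linarith

lemma const_of_exp_eq {X : Type*} [TopologicalSpace X] [PreconnectedSpace X]
    {h : X → ℝ} (hc : Continuous h) {w : Circle} (hw : ∀ x, Circle.exp (h x) = w)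
    (x y : X) : h x = h y := by
  have key : ∀ a b : X, |h a - h b| < 2 * Real.pi → h a = h b := by
    intro a b hab
    have hex : Circle.exp (h a) = Circle.exp (h b) := by rw [hw, hw]
    obtain ⟨m, hm⟩ := Circle.exp_eq_exp.1 hex
    rcases eq_or_ne m 0 with rfl | hm0
    · simpa using hm
    · exfalso
      have h1 : (1 : ℝ) ≤ |(m : ℝ)| := by
        have := Int.one_le_abs hm0
        calc (1:ℝ) = ((1:ℤ):ℝ) := by norm_num
        _ ≤ ((|m| : ℤ) : ℝ) := by exact_mod_cast this
        _ = |(m:ℝ)| := by push_cast; rfl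
      have hpi : (0:ℝ) < 2 * Real.pi := by positivity
      have : |h a - h b| = |(m:ℝ)| * (2 * Real.pi) := by
        rw [hm]; rw [show h b + m * (2*Real.pi) - h b = m * (2*Real.pi) by ring]
        rw [abs_mul, abs_of_pos hpi]
      nlinarith
  have hclopen : IsClopen {a : X | h a = h y} := by
    constructor
    · exact isClosed_eq hc continuous_const
    · rw [isOpen_iff_mem_nhds]
      intro a ha
      have hev : ∀ᶠ b in nhds a, |h b - h a| < 2 * Real.pi :=
        (hc.tendsto a).eventually (eventually_abs_sub_lt (h a) (by positivity))
      exact hev.mono fun b hb => by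
        simp only [Set.mem_setOf_eq] at ha ⊢
        rw [key b a hb, ha]
  have := hclopen.eq_univ ⟨y, rfl⟩
  have hx : x ∈ {a : X | h a = h y} := this ▸ Set.mem_univ x
  exact hx

instance : ConnectedSpace Circle :=
  Function.Surjective.connectedSpace (fun z => ⟨Complex.arg z, Circle.exp_arg z⟩)
    Circle.exp.continuous

end S10

namespace S10
open unitInterval

/-- `n` is a good subdivision for `γ` with oscillation bound `d`. -/
def Good (γ : C(unitInterval, Circle)) (n : ℕ) (d : ℝ) : Prop :=
  0 < n ∧ ∀ s t : unitInterval, |(s : ℝ) - (t : ℝ)| ≤ 1 / n → dist (γ s) (γ t) ≤ d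

/-- explicit lift of `γ / γ 0` along the subdivision of size `n`. -/
def lift (γ : C(unitInterval, Circle)) (n : ℕ) (r : ℝ) : ℝ :=
  ∑ j ∈ Finset.range n,
    Complex.arg ((γ (cl (min r ((j + 1) / n))) / γ (cl (min r (j / n))) : Circle) : ℂ)

lemma step_dist {γ : C(unitInterval, Circle)} {n : ℕ} {d : ℝ} (h : Good γ n d)
    (r : ℝ) (j : ℕ) :
    dist (γ (cl (min r ((j + 1) / n)))) (γ (cl (min r (j / n)))) ≤ d := by
  apply h.2
  have h1 : |((cl (min r ((j+1)/n)) : ℝ)) - (cl (min r (j/n)) : ℝ)| ≤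
      |min r ((j+1)/(n:ℝ)) - min r ((j:ℝ)/n)| := cl_lip _ _
  have h2 : |min r ((j+1)/(n:ℝ)) - min r ((j:ℝ)/n)| ≤ |((j:ℝ)+1)/n - (j:ℝ)/n| := by
    rw [min_comm r (((j:ℝ)+1)/n), min_comm r ((j:ℝ)/n)]
    exact abs_min_sub_min r _ _
  have h3 : |((j:ℝ)+1)/n - (j:ℝ)/n| ≤ 1 / n := by
    rcases Nat.eq_zero_or_pos n with rfl | hn
    · simp
    · have hn' : (0:ℝ) < n := by exact_mod_cast hn
      have : ((j:ℝ)+1)/n - (j:ℝ)/n = 1/n := by field_simp; ring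
      rw [this, abs_of_pos (by positivity)]
  calc |((cl (min r ((j+1)/n)) : ℝ)) - (cl (min r (j/n)) : ℝ)| ≤ _ := h1
    _ ≤ _ := h2
    _ ≤ 1/n := h3

lemma exp_sum {ι : Type*} (s : Finset ι) (f : ι → ℝ) :
    Circle.exp (∑ j ∈ s, f j) = ∏ j ∈ s, Circle.exp (f j) := by
  classical
  induction s using Finset.cons_induction with
  | empty => simp
  | cons a s ha ih => rw [Finset.sum_cons, Finset.prod_cons, Circle.exp_add, ih]

lemma lift_exp (γ : C(unitInterval, Circle)) {n : ℕ} (hn : 0 < n) (r : ℝ) :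
    Circle.exp (lift γ n r) = γ (cl (min r 1)) / γ (cl (min r 0)) := by
  rw [lift, exp_sum]
  have hterm : ∀ j ∈ Finset.range n,
      Circle.exp (Complex.arg ((γ (cl (min r ((j + 1) / n))) / γ (cl (min r (j / n))) : Circle) : ℂ))
        = γ (cl (min r ((j + 1) / n))) / γ (cl (min r (j / n))) :=
    fun j _ => Circle.exp_arg _
  rw [Finset.prod_congr rfl hterm]
  have := Finset.prod_range_div (fun j : ℕ => γ (cl (min r ((j : ℝ) / n)))) n
  simp only [Nat.cast_add, Nat.cast_one] at this ⊢
  rw [this]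
  congr 2
  · rw [div_self (by exact_mod_cast hn.ne' : (n:ℝ) ≠ 0)]
  · norm_num

lemma lift_zero (γ : C(unitInterval, Circle)) (n : ℕ) : lift γ n 0 = 0 := by
  rw [lift]
  apply Finset.sum_eq_zero
  intro j _
  have h1 : min (0:ℝ) (((j:ℝ)+1)/n) = 0 := min_eq_left (by positivity)
  have h2 : min (0:ℝ) ((j:ℝ)/n) = 0 := min_eq_left (by positivity)
  simp only [h1, h2]
  rw [div_self', Circle.coe_one, Complex.arg_one]

lemma lift_continuous {γ : C(unitInterval, Circle)} {n : ℕ} {d : ℝ} (h : Good γ n d)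
    (hd : d < 2) : Continuous (lift γ n) := by
  apply continuous_finset_sum
  intro j _
  rw [continuous_iff_continuousAt]
  intro r
  have hcirc : Continuous fun r : ℝ =>
      (γ (cl (min r ((j + 1) / n))) / γ (cl (min r (j / n))) : Circle) := by
    apply Continuous.div' <;>
      exact γ.continuous.comp ((continuous_projIcc).comp (continuous_id.min continuous_const))
  have hinner : Continuous fun r : ℝ =>
      ((γ (cl (min r ((j + 1) / n))) / γ (cl (min r (j / n))) : Circle) : ℂ) :=
    continuous_subtype_val.comp hcirc
  have harg : ContinuousAt Complex.arg
      ((γ (cl (min r ((j + 1) / n))) / γ (cl (min r (j / n))) : Circle) : ℂ) :=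
    Complex.continuousAt_arg (ratio_mem_slitPlane (lt_of_le_of_lt (step_dist h r j) hd))
  show ContinuousAt (Complex.arg ∘ fun r : ℝ =>
      ((γ (cl (min r ((j + 1) / n))) / γ (cl (min r (j / n))) : Circle) : ℂ)) r
  exact ContinuousAt.comp (x := r) harg hinner.continuousAt

lemma lift_agree {γ : C(unitInterval, Circle)} {n m : ℕ} {d d' : ℝ}
    (h : Good γ n d) (h' : Good γ m d') (hd : d < 2) (hd' : d' < 2) :
    lift γ n 1 = lift γ m 1 := by
  have key : ∀ t : unitInterval, Circle.exp (lift γ n t) = γ t / γ 0 ∧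
      Circle.exp (lift γ m t) = γ t / γ 0 := by
    intro t
    have h1 : min (t:ℝ) 1 = (t:ℝ) := min_eq_left t.2.2
    have h2 : min (t:ℝ) 0 = 0 := min_eq_right t.2.1
    constructor
    · rw [lift_exp γ h.1 t, h1, h2, cl_coe, cl_zero]
    · rw [lift_exp γ h'.1 t, h1, h2, cl_coe, cl_zero]
  have hdiff : ∀ x : unitInterval, Circle.exp (lift γ n x - lift γ m x) = 1 := by
    intro x
    rw [Circle.exp_sub, (key x).1, (key x).2, div_self']
  have hc : Continuous fun x : unitInterval => lift γ n (x:ℝ) - lift γ m (x:ℝ) :=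
    ((lift_continuous h hd).comp continuous_subtype_val).sub
      ((lift_continuous h' hd').comp continuous_subtype_val)
  have := const_of_exp_eq hc hdiff 1 0
  have h0n : lift γ n ((0:unitInterval):ℝ) = 0 := by
    rw [Set.Icc.coe_zero, lift_zero]
  have h0m : lift γ m ((0:unitInterval):ℝ) = 0 := by
    rw [Set.Icc.coe_zero, lift_zero]
  rw [Set.Icc.coe_one] at this
  rw [h0n, h0m] at this
  linarith

end S10

namespace S10

lemma exists_good (γ : C(unitInterval, Circle)) : ∃ n : ℕ, Good γ n (1/2) := by
  have huc : UniformContinuous γ := CompactSpace.uniformContinuous_of_continuous γ.continuous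
  replace huc := Metric.uniformContinuous_iff.1 huc
  obtain ⟨δ, hδ, hδ'⟩ := huc (1/2) (by norm_num)
  obtain ⟨n, hn⟩ := exists_nat_one_div_lt hδ
  refine ⟨n + 1, Nat.succ_pos n, fun s t hst => ?_⟩
  have hdist : dist s t < δ := by
    rw [Subtype.dist_eq, Real.dist_eq]
    calc |(s:ℝ) - t| ≤ 1 / ((n:ℝ) + 1) := by exact_mod_cast hst
    _ < δ := hn
  exact le_of_lt (hδ' hdist)

theorem no_planner : ¬ ∃ γ : Circle → C(unitInterval, Circle),
    Continuous γ ∧ ∀ x : Circle, γ x 0 = 1 ∧ γ x 1 = x := by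
  rintro ⟨γ, hγc, hγ⟩
  let L : Circle → ℝ := fun x => lift (γ x) (exists_good (γ x)).choose 1
  have hLspec : ∀ (x : Circle) (n : ℕ) (d : ℝ), Good (γ x) n d → d < 2 →
      lift (γ x) n 1 = L x := fun x n d h hd =>
    lift_agree h (exists_good (γ x)).choose_spec hd (by norm_num)
  have hLexp : ∀ x, Circle.exp (L x) = x := by
    intro x
    have h₀ := lift_exp (γ x) (exists_good (γ x)).choose_spec.1 1
    rw [min_self, min_eq_right zero_le_one, cl_one, cl_zero, (hγ x).1, (hγ x).2] at h₀
    simpa [L] using h₀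
  have hLcont : Continuous L := by
    rw [continuous_iff_continuousAt]
    intro x₀
    obtain ⟨n₀, hgood₀⟩ := exists_good (γ x₀)
    have hNbopen : IsOpen {x : Circle | dist (γ x) (γ x₀) < 1/2} :=
      isOpen_Iio.preimage (hγc.dist continuous_const)
    have hx₀Nb : x₀ ∈ {x : Circle | dist (γ x) (γ x₀) < 1/2} := by
      simp [dist_self]
    have hgood' : ∀ x ∈ {x : Circle | dist (γ x) (γ x₀) < 1/2}, Good (γ x) n₀ (3/2) := by
      intro x hx
      refine ⟨hgood₀.1, fun s t hst => ?_⟩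
      calc dist (γ x s) (γ x t)
          ≤ dist (γ x s) (γ x₀ s) + dist (γ x₀ s) (γ x₀ t) + dist (γ x₀ t) (γ x t) :=
            dist_triangle4 _ _ _ _
        _ ≤ dist (γ x) (γ x₀) + 1/2 + dist (γ x) (γ x₀) := by
            have h1 := ContinuousMap.dist_apply_le_dist (f := γ x) (g := γ x₀) s
            have h2 := ContinuousMap.dist_apply_le_dist (f := γ x₀) (g := γ x) t
            have h3 := hgood₀.2 s t hst
            rw [dist_comm (γ x₀) (γ x)] at h2
            linarith
        _ ≤ 3/2 := by
            have := Set.mem_setOf_eq ▸ hx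
            linarith [this]
    have hEq : ∀ x ∈ {x : Circle | dist (γ x) (γ x₀) < 1/2},
        L x = lift (γ x) n₀ 1 := fun x hx =>
      (hLspec x n₀ (3/2) (hgood' x hx) (by norm_num)).symm
    have hcont2 : ContinuousAt (fun x => lift (γ x) n₀ 1) x₀ := by
      have hterm : ∀ j ∈ Finset.range n₀, ContinuousAt (fun x : Circle =>
          Complex.arg ((γ x (cl (min 1 ((j+1)/n₀))) / γ x (cl (min 1 (j/n₀))) : Circle) : ℂ)) x₀ := by
        intro j _
        have hcirc : Continuous fun x : Circle =>
            (γ x (cl (min 1 ((j+1)/n₀))) / γ x (cl (min 1 (j/n₀))) : Circle) := by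
          apply Continuous.div' <;> exact (continuous_eval_const _).comp hγc
        have hinner : Continuous fun x : Circle =>
            ((γ x (cl (min 1 ((j+1)/n₀))) / γ x (cl (min 1 (j/n₀))) : Circle) : ℂ) :=
          continuous_subtype_val.comp hcirc
        have harg : ContinuousAt Complex.arg
            ((γ x₀ (cl (min 1 ((j+1)/n₀))) / γ x₀ (cl (min 1 (j/n₀))) : Circle) : ℂ) :=
          Complex.continuousAt_arg (ratio_mem_slitPlane
            (lt_of_le_of_lt (step_dist hgood₀ 1 j) (by norm_num)))
        exact ContinuousAt.comp (x := x₀) harg hinner.continuousAt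
      unfold lift
      exact tendsto_finset_sum _ fun j hj => hterm j hj
    exact hcont2.congr ((Filter.eventuallyEq_of_mem (hNbopen.mem_nhds hx₀Nb) hEq).symm)
  have hm1mem : (-1 : ℂ) ∈ Submonoid.unitSphere ℂ := by
    simp [Submonoid.unitSphere]
  let m1 : Circle := ⟨-1, hm1mem⟩
  have hm1sq : m1 * m1 = 1 := Circle.ext (by rw [Circle.coe_mul]; show (-1:ℂ) * -1 = 1; norm_num)
  let g : Circle → ℝ := fun x => L (m1 * x) - L x
  have hgexp : ∀ x, Circle.exp (g x) = m1 := by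
    intro x
    show Circle.exp (L (m1 * x) - L x) = m1
    rw [Circle.exp_sub, hLexp, hLexp, mul_div_assoc, div_self', mul_one]
  have hgc : Continuous g :=
    ((hLcont.comp (continuous_const.mul continuous_id)).sub hLcont)
  have hgconst := const_of_exp_eq hgc hgexp
  have e1 : g 1 = L m1 - L 1 := by simp [g]
  have e2 : g m1 = L 1 - L m1 := by simp [g, hm1sq]
  have h10 : g 1 = 0 := by
    have h12 := hgconst 1 m1
    rw [e1, e2] at h12
    rw [e1]
    linarith
  have hone : (1 : Circle) = m1 := by rw [← Circle.exp_zero, ← h10]; exact hgexp 1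
  have hfin : (1:ℂ) = -1 := congrArg (fun z : Circle => (z:ℂ)) hone
  norm_num at hfin

end S10

section Aux
open Set Complex unitInterval MulAction

noncomputable section
namespace S10

abbrev Q := Quotient (MulAction.orbitRel Circle Circle)

instance : Subsingleton Q := ⟨by
  intro a b
  induction a using Quotient.inductionOn with
  | h x =>
  induction b using Quotient.inductionOn with
  | h y =>
  exact Quot.sound ((MulAction.orbitRel_apply).2 ⟨x * y⁻¹, by
    simp [smul_eq_mul, mul_assoc]⟩)⟩

lemma isOpenMap_subsingleton {Z W : Type*} [TopologicalSpace Z] [TopologicalSpace W]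
    [Subsingleton W] (f : Z → W) : IsOpenMap f := by
  intro U hU
  rcases U.eq_empty_or_nonempty with rfl | ⟨z, hz⟩
  · simp
  · have : f '' U = Set.univ :=
      Set.eq_univ_of_forall fun w => ⟨z, hz, Subsingleton.elim _ _⟩
    rw [this]; exact isOpen_univ

/-! ### Slit plane membership from not being `-1` -/

lemma coe_mem_slitPlane_of_ne_neg_one {z : Circle} (h : (z : ℂ) ≠ -1) :
    (z : ℂ) ∈ Complex.slitPlane := by
  by_contra hns
  rw [Complex.mem_slitPlane_iff] at hns
  push_neg at hns
  obtain ⟨h1, h2⟩ := hns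
  apply h
  have habs : ‖(z : ℂ)‖ = 1 := Circle.norm_coe _
  have him : (z : ℂ) = (((z : ℂ)).re : ℂ) := by apply Complex.ext <;> simp [h2]
  rw [him] at habs ⊢
  rw [Complex.norm_real, Real.norm_eq_abs] at habs
  have : ((z : ℂ)).re = -1 := by
    rcases abs_cases ((z : ℂ)).re with ⟨h3, _⟩ | ⟨h3, _⟩ <;> linarith
  rw [this]
  norm_num

/-! ### The motion planners on the circle -/

/-- elementary planner: rotate at speed `θ p`. -/
def plan (θ : Circle × Circle → ℝ) (p : Circle × Circle) : C(unitInterval, Circle) :=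
  ⟨fun t => p.1 * Circle.exp ((t : ℝ) * θ p),
   continuous_const.mul (Circle.exp.continuous.comp (continuous_subtype_val.mul
     continuous_const))⟩

lemma plan_contOn {U : Set (Circle × Circle)} {θ : Circle × Circle → ℝ}
    (hθ : ContinuousOn θ U) : ContinuousOn (plan θ) U := by
  rw [continuousOn_iff_continuous_restrict]
  have hj : Continuous fun q : ↥U × unitInterval =>
      (q.1 : Circle × Circle).1 * Circle.exp ((q.2 : ℝ) * θ (q.1 : Circle × Circle)) := by
    apply Continuous.mul
    · exact continuous_fst.comp (continuous_subtype_val.comp continuous_fst)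
    · refine Circle.exp.continuous.comp (Continuous.mul ?_ ?_)
      · exact continuous_subtype_val.comp continuous_snd
      · exact (continuousOn_iff_continuous_restrict.1 hθ).comp continuous_fst
  let F : C(↥U × unitInterval, Circle) := ⟨_, hj⟩
  have hres : Set.restrict U (plan θ) = fun q => F.curry q := by
    funext q; ext t; rfl
  change Continuous (Set.restrict U (plan θ))
  rw [hres]
  exact F.curry.continuous

lemma mul_div_cancel_circle (a b : Circle) : a * (b / a) = b := by
  apply Circle.ext
  push_cast
  field_simp

def m1 : Circle := ⟨-1, by simp [Submonoid.unitSphere]⟩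

@[simp] lemma m1_coe : (m1 : ℂ) = -1 := rfl

lemma m1_sq : m1 * m1 = 1 := Circle.ext (by simp)

lemma exp_pi : Circle.exp Real.pi = m1 := by
  apply Circle.ext
  rw [Circle.coe_exp]
  exact Complex.exp_pi_mul_I

lemma circle_cover_two : TCCover Circle 2 := by
  classical
  refine ⟨![{p : Circle × Circle | ((p.2 / p.1 : Circle) : ℂ) ≠ -1},
            {p : Circle × Circle | ((p.2 / p.1 : Circle) : ℂ) ≠ 1}], ?_, ?_⟩
  · rw [Set.eq_univ_iff_forall]
    intro p
    rw [Set.mem_iUnion]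
    by_cases h : ((p.2 / p.1 : Circle) : ℂ) = -1
    · refine ⟨1, ?_⟩
      simp only [Matrix.cons_val_one, Matrix.head_cons, Set.mem_setOf_eq, h]
      show ((p.2 / p.1 : Circle) : ℂ) ≠ 1; rw [h]; norm_num
    · exact ⟨0, h⟩
  · have hcirc : Continuous fun p : Circle × Circle => (p.2 / p.1 : Circle) :=
      continuous_snd.div' continuous_fst
    have hratio : Continuous fun p : Circle × Circle => ((p.2 / p.1 : Circle) : ℂ) :=
      continuous_subtype_val.comp hcirc
    intro i
    fin_cases i
    · -- non-antipodal pairs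
      simp only [Fin.isValue, Matrix.cons_val_zero]
      constructor
      · exact (isOpen_compl_singleton (x := (-1 : ℂ))).preimage hratio
      · refine ⟨plan (fun p => Complex.arg ((p.2 / p.1 : Circle) : ℂ)), ?_, ?_⟩
        · apply plan_contOn
          intro p hp
          have harg : ContinuousAt Complex.arg ((p.2 / p.1 : Circle) : ℂ) :=
            Complex.continuousAt_arg (coe_mem_slitPlane_of_ne_neg_one hp)
          have h1 : ContinuousAt (Complex.arg ∘ fun p : Circle × Circle =>
              ((p.2 / p.1 : Circle) : ℂ)) p :=
            ContinuousAt.comp (x := p) harg hratio.continuousAt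
          exact h1.continuousWithinAt
        · intro p _
          constructor
          · show p.1 * Circle.exp (((0 : unitInterval) : ℝ) * _) = p.1
            norm_num
          · show p.1 * Circle.exp (((1 : unitInterval) : ℝ) * _) = p.2
            rw [Set.Icc.coe_one, one_mul, Circle.exp_arg, mul_div_cancel_circle]
    · -- non-equal pairs
      simp only [Fin.isValue, Matrix.cons_val_one, Matrix.head_cons]
      constructor
      · exact (isOpen_compl_singleton (x := (1 : ℂ))).preimage hratio
      · refine ⟨plan (fun p => Real.pi +
            Complex.arg ((m1 * (p.2 / p.1) : Circle) : ℂ)), ?_, ?_⟩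
        · apply plan_contOn
          intro p hp
          apply ContinuousWithinAt.add continuousWithinAt_const
          have hc2 : Continuous fun p : Circle × Circle => (m1 * (p.2 / p.1) : Circle) :=
            continuous_const.mul hcirc
          have hr2 : Continuous fun p : Circle × Circle =>
              ((m1 * (p.2 / p.1) : Circle) : ℂ) := continuous_subtype_val.comp hc2
          have hsl : ((m1 * (p.2 / p.1) : Circle) : ℂ) ∈ Complex.slitPlane := by
            apply coe_mem_slitPlane_of_ne_neg_one
            intro hcon
            apply hp
            show ((p.2 / p.1 : Circle) : ℂ) = 1
            have hco : ((m1 * (p.2 / p.1) : Circle) : ℂ) = -((p.2 / p.1 : Circle) : ℂ) := by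
              rw [Circle.coe_mul, m1_coe]; ring
            rw [hco] at hcon
            have := neg_eq_iff_eq_neg.1 hcon
            rw [this]; norm_num
          have harg : ContinuousAt Complex.arg ((m1 * (p.2 / p.1) : Circle) : ℂ) :=
            Complex.continuousAt_arg hsl
          have h1 : ContinuousAt (Complex.arg ∘ fun p : Circle × Circle =>
              ((m1 * (p.2 / p.1) : Circle) : ℂ)) p :=
            ContinuousAt.comp (x := p) harg hr2.continuousAt
          exact h1.continuousWithinAt
        · intro p _
          constructor
          · show p.1 * Circle.exp (((0 : unitInterval) : ℝ) * _) = p.1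
            norm_num
          · show p.1 * Circle.exp (((1 : unitInterval) : ℝ) * _) = p.2
            rw [Set.Icc.coe_one, one_mul, Circle.exp_add, exp_pi, Circle.exp_arg]
            apply Circle.ext
            have h1 : ((p.1 : Circle) : ℂ) ≠ 0 := Circle.coe_ne_zero _
            simp only [Circle.coe_mul, Circle.coe_div, m1_coe]
            field_simp

lemma not_cover_zero (X : Type*) [TopologicalSpace X] [Nonempty X] : ¬ TCCover X 0 := by
  rintro ⟨U, hUuniv, -⟩
  have : (Classical.arbitrary X, Classical.arbitrary X) ∈ ⋃ i, U i :=
    hUuniv ▸ Set.mem_univ _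
  obtain ⟨i, -⟩ := Set.mem_iUnion.1 this
  exact i.elim0

lemma not_circle_cover_one : ¬ TCCover Circle 1 := by
  rintro ⟨U, hUuniv, hU⟩
  obtain ⟨-, s, hscont, hsend⟩ := hU 0
  have hU0 : U 0 = Set.univ := by
    rw [Set.eq_univ_iff_forall]
    intro p
    have hp : p ∈ ⋃ i, U i := hUuniv ▸ Set.mem_univ p
    obtain ⟨i, hi⟩ := Set.mem_iUnion.1 hp
    rwa [Subsingleton.elim i 0] at hi
  apply no_planner
  refine ⟨fun x => s (1, x), ?_, fun x => ?_⟩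
  · have hs : Continuous s := by
      rw [← continuousOn_univ, ← hU0]; exact hscont
    exact hs.comp (continuous_const.prodMk continuous_id)
  · exact hsend (1, x) (hU0 ▸ Set.mem_univ _)

lemma farber_eq (X : Type*) [TopologicalSpace X] {n : ℕ} (h : TCCover X n)
    (hlow : ∀ m : ℕ, TCCover X m → n ≤ m) : FarberTC X = n := by
  apply le_antisymm
  · exact sInf_le ⟨n, rfl, h⟩
  · apply le_sInf
    rintro b ⟨m, rfl, hm⟩
    exact_mod_cast hlow m hm

lemma farberTC_circle : FarberTC Circle = 2 := by
  have := farber_eq Circle circle_cover_two (fun m hm => by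
    by_contra hcon
    push_neg at hcon
    interval_cases m
    · exact not_cover_zero Circle hm
    · exact not_circle_cover_one hm)
  exact_mod_cast this

lemma two_le_eqvTC_circle : 2 ≤ eqvTC Circle Circle := by
  apply le_sInf
  rintro b ⟨n, rfl, hn⟩
  have hTC : TCCover Circle n := by
    obtain ⟨U, hu, hU⟩ := hn
    exact ⟨U, hu, fun i => ⟨(hU i).1, by
      obtain ⟨s, h1, h2, -⟩ := (hU i).2.2
      exact ⟨s, h1, h2⟩⟩⟩
  have hn2 : 2 ≤ n := by
    by_contra hcon
    push_neg at hcon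
    interval_cases n
    · exact not_cover_zero Circle hTC
    · exact not_circle_cover_one hTC
  exact_mod_cast hn2

lemma farberTC_Q : FarberTC Q = 1 := by
  have hnonempty : Nonempty Q := ⟨Quotient.mk _ 1⟩
  have hcover : TCCover Q 1 := by
    refine ⟨fun _ => Set.univ, Set.iUnion_const _, fun i => ⟨isOpen_univ,
      fun p => ContinuousMap.const _ p.1, ?_, ?_⟩⟩
    · exact (ContinuousMap.continuous_const'.comp continuous_fst).continuousOn
    · exact fun p _ => ⟨rfl, Subsingleton.elim _ _⟩
  have := farber_eq Q hcover (fun m hm => by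
    by_contra hcon
    push_neg at hcon
    interval_cases m
    exact not_cover_zero Q hm)
  exact_mod_cast this

end S10
end
end Aux

/-- equivariant topological complexity is not Morita invariant. The
free rotation action of `S¹` on itself is Morita equivalent to the trivial action on
the point `S¹/S¹`, yet `TC_{S¹}(S¹) ≥ TC(S¹) = 2` while `TC(S¹/S¹) = 1`. -/
theorem statement10 :
    MoritaEquivalent
        { group := Circle, carrier := Circle, continuous_smul := continuous_smul }
        { group := ↥(⊥ : Subgroup Circle),
          carrier := Quotient (MulAction.orbitRel Circle Circle),
          continuous_smul := continuous_snd } ∧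
    FarberTC Circle = 2 ∧
    2 ≤ eqvTC Circle Circle ∧
    FarberTC (Quotient (MulAction.orbitRel Circle Circle)) = 1 := by
  refine ⟨?_, S10.farberTC_circle, S10.two_le_eqvTC_circle, S10.farberTC_Q⟩
  refine ⟨{ group := Circle, carrier := Circle, continuous_smul := continuous_smul }, ?_, ?_⟩
  · -- essential equivalence to itself
    refine ⟨MonoidHom.id Circle, id, continuous_id, continuous_id, fun g x => rfl,
      fun y => ⟨(y, 1), one_smul _ _⟩, ?_, ?_⟩
    · -- open map
      have h : IsOpenMap (Prod.snd ∘ ⇑(Homeomorph.shearMulRight Circle) ∘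
          ⇑(Homeomorph.prodComm Circle Circle)) :=
        isOpenMap_snd.comp ((Homeomorph.shearMulRight Circle).isOpenMap.comp
          (Homeomorph.prodComm Circle Circle).isOpenMap)
      exact h
    · refine ⟨⟨⟨fun q => ⟨((q.1, q.2), (q.2, q.1 • q.2)), rfl, rfl⟩,
        fun q => q.val.1, fun q => rfl, ?_⟩, ?_, ?_⟩, fun g x => rfl⟩
      · rintro ⟨⟨⟨h, y⟩, x1, x2⟩, h1, h2⟩
        apply Subtype.ext
        show ((h, y), (y, h • y)) = ((h, y), (x1, x2))
        have e1 : x1 = y := h1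
        have e2 : x2 = h • y := h2
        rw [e1, e2]
      · exact Continuous.subtype_mk ((continuous_fst.prodMk continuous_snd).prodMk
          (continuous_snd.prodMk continuous_smul)) _
      · exact continuous_fst.comp continuous_subtype_val
  · -- essential equivalence to the point
    refine ⟨1, Quotient.mk (MulAction.orbitRel Circle Circle), continuous_const, ?_, ?_, ?_, ?_, ?_⟩
    · exact continuous_quot_mk
    · intro g x
      exact Quot.sound ((MulAction.orbitRel_apply).2 (MulAction.mem_orbit x g))
    · intro q
      obtain ⟨x, hx⟩ := Quot.exists_rep q
      exact ⟨(x, 1), hx⟩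
    · exact S10.isOpenMap_subsingleton _
    · refine ⟨⟨⟨fun q => ⟨(((1 : ↥(⊥ : Subgroup Circle)), Quotient.mk _ q.2), (q.2, q.1 • q.2)),
        rfl, Quot.sound ((MulAction.orbitRel_apply).2 (MulAction.mem_orbit q.2 q.1))⟩,
        fun q => (q.val.2.2 * q.val.2.1⁻¹, q.val.2.1), ?_, ?_⟩, ?_, ?_⟩, fun g x => rfl⟩
      · rintro ⟨g, x⟩
        show ((g • x) * x⁻¹, x) = (g, x)
        rw [smul_eq_mul, mul_inv_cancel_right]
      · rintro ⟨⟨⟨h, y⟩, x1, x2⟩, h1, h2⟩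
        apply Subtype.ext
        show (((1 : ↥(⊥ : Subgroup Circle)), Quotient.mk _ x1), (x1, (x2 * x1⁻¹) • x1))
          = ((h, y), (x1, x2))
        have e0 : (1 : ↥(⊥ : Subgroup Circle)) = h := Subsingleton.elim _ _
        have e2 : (x2 * x1⁻¹) • x1 = x2 := by rw [smul_eq_mul, inv_mul_cancel_right]
        rw [e0, e2, h1]
      · refine Continuous.subtype_mk ?_ _
        exact (continuous_const.prodMk (continuous_quot_mk.comp continuous_snd)).prodMk
          (continuous_snd.prodMk continuous_smul)
      · refine Continuous.prodMk ?_ ?_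
        · exact ((continuous_snd.comp (continuous_snd.comp continuous_subtype_val)).mul
            ((continuous_fst.comp (continuous_snd.comp continuous_subtype_val)).inv))
        · exact continuous_fst.comp (continuous_snd.comp continuous_subtype_val)
end
end

section
/- For a G-space X, the invariant topological complexity TC^G(X) equals _{ℸ^{G×G}(X)}cat_{G×G}(X × X), where ℸ^{G×G}(X) is the saturation of the diagonal Δ(X) under the (G×G)-action: X×X can be covered by k (G×G)-invariant open sets each admitting a (G×G)-equivariant homotopy section of ev' : X^I ×_{X/G} X^I → X × X if and only if it can be covered by k (G×G)-invariant open sets each (G×G)-compressible into ℸ^{G×G}(X). -/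
open Set MulAction Function


/-- A subset invariant under the action of `G`. -/
def IsInvariantSet (G : Type*) {X : Type*} [SMul G X] (A : Set X) : Prop :=
  ∀ g : G, ∀ x ∈ A, g • x ∈ A

/-- `U` is `G`-equivariantly compressible into `A` inside the ambient `G`-space `X`:
the inclusion of `U` is `G`-homotopic to a map with image in `A`. -/
def EqvCompressible (G : Type*) {X : Type*} [SMul G X] [TopologicalSpace X]
    (U A : Set X) : Prop :=
  ∃ H : X → unitInterval → X,
    ContinuousOn (fun p : X × unitInterval => H p.1 p.2) (U ×ˢ Set.univ) ∧
    (∀ x ∈ U, H x 0 = x) ∧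
    (∀ x ∈ U, H x 1 ∈ A) ∧
    (∀ g : G, ∀ x ∈ U, ∀ t, H (g • x) t = g • H x t)

/-- `X` is covered by `k` `G`-invariant open sets, each `G`-compressible into a member of `𝒜`. -/
def ACatCover (G : Type*) {X : Type*} [SMul G X] [TopologicalSpace X]
    (𝒜 : Set (Set X)) (k : ℕ) : Prop :=
  ∃ U : Fin k → Set X, (⋃ i, U i) = Set.univ ∧
    ∀ i, IsOpen (U i) ∧ IsInvariantSet G (U i) ∧ ∃ A ∈ 𝒜, EqvCompressible G (U i) A

/-- The equivariant `𝒜`-category of Clapp–Puppe, `_{𝒜}cat_G(X)`. -/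
noncomputable def eqvACat (G : Type*) {X : Type*} [SMul G X] [TopologicalSpace X]
    (𝒜 : Set (Set X)) : ℕ∞ :=
  sInf {k : ℕ∞ | ∃ n : ℕ, k = n ∧ ACatCover G 𝒜 n}

/-- The equivariant LS-category `cat_G(X)`: the class `𝒜` is the class of orbits. -/
noncomputable def eqvCat (G : Type*) (X : Type*) [Group G] [MulAction G X]
    [TopologicalSpace X] : ℕ∞ :=
  eqvACat G {A : Set X | ∃ x : X, A = MulAction.orbit G x}

/-- Non-equivariant compressibility of `U` into `A`. -/
def Compressible {X : Type*} [TopologicalSpace X] (U A : Set X) : Prop :=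
  ∃ H : X → unitInterval → X,
    ContinuousOn (fun p : X × unitInterval => H p.1 p.2) (U ×ˢ Set.univ) ∧
    (∀ x ∈ U, H x 0 = x) ∧ (∀ x ∈ U, H x 1 ∈ A)

def PlainACatCover {X : Type*} [TopologicalSpace X] (𝒜 : Set (Set X)) (k : ℕ) : Prop :=
  ∃ U : Fin k → Set X, (⋃ i, U i) = Set.univ ∧
    ∀ i, IsOpen (U i) ∧ ∃ A ∈ 𝒜, Compressible (U i) A

/-- The (non-equivariant) `𝒜`-category of Clapp–Puppe. -/
noncomputable def plainACat {X : Type*} [TopologicalSpace X] (𝒜 : Set (Set X)) : ℕ∞ :=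
  sInf {k : ℕ∞ | ∃ n : ℕ, k = n ∧ PlainACatCover 𝒜 n}

/-- Ordinary Lusternik–Schnirelmann category. -/
noncomputable def LScat (X : Type*) [TopologicalSpace X] : ℕ∞ :=
  plainACat {A : Set X | ∃ a : X, A = {a}}

/-- The coordinatewise action of `G × H` on `X × Y`. -/
instance prodPairMulAction {G H X Y : Type*} [Monoid G] [Monoid H]
    [MulAction G X] [MulAction H Y] : MulAction (G × H) (X × Y) where
  smul a p := (a.1 • p.1, a.2 • p.2)
  one_smul p := by
    show ((1 : G) • p.1, (1 : H) • p.2) = p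
    simp
  mul_smul a b p := by
    show ((a.1 * b.1) • p.1, (a.2 * b.2) • p.2) = (a.1 • b.1 • p.1, a.2 • b.2 • p.2)
    simp [mul_smul]

/-- The saturation of a subset `S` with respect to the `G`-action: the union of
all `G`-orbits meeting `S`. -/
def Saturation (G : Type*) {X : Type*} [SMul G X] (S : Set X) : Set X :=
  {x | ∃ g : G, ∃ s ∈ S, x = g • s}

/-- `X × X` is covered by `k` `(G × G)`-invariant open sets, each admitting a
`(G × G)`-equivariant homotopy section of
`ev' : X^I ×_{X/G} X^I → X × X`, `ev'(α, β) = (α 0, β 1)`. -/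
def invTCCover (G : Type*) (X : Type*) [Group G] [MulAction G X] [TopologicalSpace X]
    (k : ℕ) : Prop :=
  ∃ U : Fin k → Set (X × X), (⋃ i, U i) = Set.univ ∧
    ∀ i, IsOpen (U i) ∧ IsInvariantSet (G × G) (U i) ∧
      ∃ s : X × X → C(unitInterval, X) × C(unitInterval, X),
        ContinuousOn s (U i) ∧
        (∀ p ∈ U i,
          (Quotient.mk'' ((s p).1 1) : Quotient (MulAction.orbitRel G X))
            = Quotient.mk'' ((s p).2 0)) ∧
        (∀ gg : G × G, ∀ p ∈ U i, ∀ t,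
          (s (gg • p)).1 t = gg.1 • (s p).1 t ∧ (s (gg • p)).2 t = gg.2 • (s p).2 t) ∧
        ∃ Hh : X × X → unitInterval → X × X,
          ContinuousOn (fun q : (X × X) × unitInterval => Hh q.1 q.2) (U i ×ˢ Set.univ) ∧
          (∀ p ∈ U i, Hh p 0 = ((s p).1 0, (s p).2 1)) ∧
          (∀ p ∈ U i, Hh p 1 = p) ∧
          (∀ gg : G × G, ∀ p ∈ U i, ∀ t, Hh (gg • p) t = gg • Hh p t)

/-- The invariant topological complexity of Lubawski–Marzantowicz. -/
noncomputable def invTC (G : Type*) (X : Type*) [Group G] [MulAction G X]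
    [TopologicalSpace X] : ℕ∞ :=
  sInf {k : ℕ∞ | ∃ n : ℕ, k = n ∧ invTCCover G X n}

section Aux

open Set

/-- Clamp a real number into the unit interval. -/
noncomputable def clampI (x : ℝ) : unitInterval := Set.projIcc 0 1 zero_le_one x

lemma clampI_coe (x : ℝ) : (clampI x : ℝ) = max 0 (min 1 x) := rfl

lemma clampI_eq_zero {x : ℝ} (h : x ≤ 0) : clampI x = 0 := by
  ext; rw [clampI_coe, min_eq_right (le_trans h zero_le_one), max_eq_left h]; rfl

lemma clampI_eq_one {x : ℝ} (h : 1 ≤ x) : clampI x = 1 := by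
  ext; rw [clampI_coe]
  rw [min_eq_left h, max_eq_right zero_le_one]; rfl

/-- First reparametrisation: `t ↦ 1 - 2t`, clamped. -/
noncomputable def tA (t : unitInterval) : unitInterval := clampI (1 - 2 * (t : ℝ))

/-- Second reparametrisation: `t ↦ 2t - 1`, clamped. -/
noncomputable def tB (t : unitInterval) : unitInterval := clampI (2 * (t : ℝ) - 1)

/-- Third reparametrisation: `t ↦ 2 - 2t`, clamped. -/
noncomputable def tC (t : unitInterval) : unitInterval := clampI (2 - 2 * (t : ℝ))

lemma continuous_clampI : Continuous clampI := continuous_projIcc (h := zero_le_one)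

lemma continuous_tA : Continuous tA :=
  continuous_clampI.comp (by continuity)

lemma continuous_tB : Continuous tB :=
  continuous_clampI.comp (by continuity)

lemma continuous_tC : Continuous tC :=
  continuous_clampI.comp (by continuity)

lemma tA_zero : tA 0 = 1 := by
  apply clampI_eq_one; norm_num

lemma tA_half {t : unitInterval} (h : (t : ℝ) = 1/2) : tA t = 0 := by
  apply clampI_eq_zero; rw [h]; norm_num

lemma tB_half {t : unitInterval} (h : (t : ℝ) = 1/2) : tB t = 0 := by
  apply clampI_eq_zero; rw [h]; norm_num

lemma tC_half {t : unitInterval} (h : (t : ℝ) = 1/2) : tC t = 1 := by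
  apply clampI_eq_one; rw [h]; norm_num

lemma tB_one : tB 1 = 1 := by
  apply clampI_eq_one; norm_num

lemma tC_one : tC 1 = 0 := by
  apply clampI_eq_zero; norm_num

end Aux

section MainAux

lemma pair_smul_def {G X : Type*} [Group G] [MulAction G X] (gg : G × G) (p : X × X) :
    gg • p = (gg.1 • p.1, gg.2 • p.2) := rfl

lemma cover_iff (G X : Type*) [Group G] [MulAction G X] [TopologicalSpace X] (k : ℕ) :
    invTCCover G X k ↔
      ACatCover (G × G) {Saturation (G × G) (Set.diagonal X)} k := by
  classical
  constructor
  · rintro ⟨U, hUcov, hU⟩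
    refine ⟨U, hUcov, fun i => ?_⟩
    obtain ⟨hop, hinv, s, hscont, hsq, hseqv, Hh, hHhcont, hHh0, hHh1, hHheqv⟩ := hU i
    refine ⟨hop, hinv, _, Set.mem_singleton _, ?_⟩
    refine ⟨fun p t => if (t : ℝ) ≤ 1/2 then Hh p (tA t)
      else ((s p).1 (tB t), (s p).2 (tC t)), ?_, ?_, ?_, ?_⟩
    · apply ContinuousOn.if
      · rintro ⟨p, t⟩ ⟨⟨hpU, -⟩, hfr⟩
        have ht : (t : ℝ) = 1/2 :=
          frontier_le_subset_eq (f := fun q : (X × X) × unitInterval => (q.2 : ℝ))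
            (g := fun _ => (1/2 : ℝ)) (by fun_prop) continuous_const hfr
        simp only [tA_half ht, tB_half ht, tC_half ht]
        exact hHh0 p hpU
      · refine (hHhcont.comp (f := fun q : (X × X) × unitInterval => (q.1, tA q.2))
          (continuous_fst.prodMk (continuous_tA.comp continuous_snd)).continuousOn
          (fun q (hq : q ∈ (U i) ×ˢ (Set.univ : Set unitInterval)) => ⟨hq.1, trivial⟩)).mono ?_
        exact Set.inter_subset_left
      · have h1 : ContinuousOn (fun q : (X × X) × unitInterval => s q.1)
            ((U i) ×ˢ (Set.univ : Set unitInterval)) :=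
          hscont.comp continuous_fst.continuousOn
            (fun q (hq : q ∈ (U i) ×ˢ (Set.univ : Set unitInterval)) => hq.1)
        have heval : Continuous (fun z : C(unitInterval, X) × unitInterval => z.1 z.2) :=
          continuous_eval
        have h2 : ContinuousOn (fun q : (X × X) × unitInterval => (s q.1).1 (tB q.2))
            ((U i) ×ˢ Set.univ) :=
          heval.comp_continuousOn
            ((continuous_fst.comp_continuousOn h1).prodMk
              ((continuous_tB.comp continuous_snd).continuousOn))
        have h3 : ContinuousOn (fun q : (X × X) × unitInterval => (s q.1).2 (tC q.2))
            ((U i) ×ˢ Set.univ) :=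
          heval.comp_continuousOn
            ((continuous_snd.comp_continuousOn h1).prodMk
              ((continuous_tC.comp continuous_snd).continuousOn))
        exact (h2.prodMk h3).mono (fun q hq => hq.1)
    · intro x hx
      have h0 : ((0 : unitInterval) : ℝ) ≤ 1/2 := by norm_num
      beta_reduce
      rw [if_pos h0, tA_zero]
      exact hHh1 x hx
    · intro x hx
      have h1 : ¬ ((1 : unitInterval) : ℝ) ≤ 1/2 := by norm_num
      beta_reduce
      rw [if_neg h1, tB_one, tC_one]
      have hq := hsq x hx
      have hrel := Quotient.exact' hq
      rw [MulAction.orbitRel_apply] at hrel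
      obtain ⟨g, hg⟩ := hrel
      exact ⟨(g, 1), ((s x).2 0, (s x).2 0), rfl,
        Prod.ext hg.symm (one_smul G _).symm⟩
    · intro gg p hp t
      have hgp : gg • p ∈ U i := hinv gg p hp
      beta_reduce
      by_cases h : (t : ℝ) ≤ 1/2
      · rw [if_pos h, if_pos h]
        exact hHheqv gg p hp (tA t)
      · rw [if_neg h, if_neg h, pair_smul_def]
        exact Prod.ext (hseqv gg p hp (tB t)).1 (hseqv gg p hp (tC t)).2
  · rintro ⟨U, hUcov, hU⟩
    refine ⟨U, hUcov, fun i => ?_⟩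
    obtain ⟨hop, hinv, A, hA, H, hHcont, hH0, hH1, hHeqv⟩ := hU i
    rw [Set.mem_singleton_iff] at hA; subst hA
    have hcur : ∀ p ∈ U i, Continuous fun t => H p t := fun p hp =>
      hHcont.comp_continuous (continuous_const.prodMk continuous_id)
        (fun t => ⟨hp, trivial⟩)
    set s : X × X → C(unitInterval, X) × C(unitInterval, X) := fun p =>
      if h : p ∈ U i then
        (⟨fun t => (H p t).1, continuous_fst.comp (hcur p h)⟩,
         ⟨fun t => (H p (unitInterval.symm t)).2,
           continuous_snd.comp ((hcur p h).comp unitInterval.continuous_symm)⟩)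
      else (ContinuousMap.const _ p.1, ContinuousMap.const _ p.2) with hs
    refine ⟨hop, hinv, s, ?_, ?_, ?_, fun p _ => p, continuous_fst.continuousOn, ?_,
      fun p _ => rfl, fun gg p _ t => rfl⟩
    · rw [continuousOn_iff_continuous_restrict]
      have hbase : Continuous (fun q : ↥(U i) × unitInterval => H q.1.1 q.2) :=
        hHcont.comp_continuous
          ((continuous_subtype_val.comp continuous_fst).prodMk continuous_snd)
          (fun q => ⟨q.1.2, trivial⟩)
      have hre : Set.domRestrict (U i) s = fun u : ↥(U i) =>
          ((⟨fun t => (H u.1 t).1, continuous_fst.comp (hcur u.1 u.2)⟩ :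
              C(unitInterval, X)),
           (⟨fun t => (H u.1 (unitInterval.symm t)).2,
              continuous_snd.comp ((hcur u.1 u.2).comp unitInterval.continuous_symm)⟩ :
              C(unitInterval, X))) := by
        funext u
        simp only [Set.domRestrict_apply, hs, dif_pos u.2]
      rw [hre]
      apply Continuous.prodMk
      · exact ContinuousMap.continuous_of_continuous_uncurry _ hbase.fst
      · exact ContinuousMap.continuous_of_continuous_uncurry _
          ((hbase.comp (continuous_fst.prodMk
            (unitInterval.continuous_symm.comp continuous_snd))).snd)
    · intro p hp
      simp only [hs, dif_pos hp, ContinuousMap.coe_mk, unitInterval.symm_zero]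
      obtain ⟨gg, d, hd, heq⟩ := hH1 p hp
      have hd' : d.1 = d.2 := hd
      have h1 : (H p 1).1 = gg.1 • d.1 := by rw [heq]; rfl
      have h2 : (H p 1).2 = gg.2 • d.1 := by rw [heq, hd']; rfl
      rw [h1, h2]
      apply Quotient.sound'
      rw [MulAction.orbitRel_apply]
      have hwit : (gg.1 * gg.2⁻¹) • gg.2 • d.1 = gg.1 • d.1 := by
        rw [mul_smul, inv_smul_smul]
      exact ⟨gg.1 * gg.2⁻¹, hwit⟩
    · intro gg p hp t
      have hgp : gg • p ∈ U i := hinv gg p hp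
      simp only [hs, dif_pos hp, dif_pos hgp, ContinuousMap.coe_mk]
      constructor
      · rw [hHeqv gg p hp t]; rfl
      · rw [hHeqv gg p hp (unitInterval.symm t)]; rfl
    · intro p hp
      simp only [hs, dif_pos hp, ContinuousMap.coe_mk, unitInterval.symm_one, hH0 p hp]

end MainAux

/-- `TC^G(X) = _{ℸ^{G×G}(X)}cat_{G×G}(X × X)`, where `ℸ^{G×G}(X)` is
the saturation of the diagonal. -/
theorem statement13 (G : Type*) (X : Type*) [Group G] [MulAction G X]
    [TopologicalSpace X] :
    invTC G X = eqvACat (G × G) {Saturation (G × G) (Set.diagonal X)} := by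
  unfold invTC eqvACat
  congr 1
  ext k
  simp only [Set.mem_setOf_eq]
  constructor <;> rintro ⟨n, rfl, h⟩
  · exact ⟨n, rfl, (cover_iff G X n).mp h⟩
  · exact ⟨n, rfl, (cover_iff G X n).mpr h⟩
end

section
/- Let ψ⋉ε : G⋉X → H⋉Y be an essential equivalence of translation groupoids. Then the saturation ℸ^{H×H}(Y) of the diagonal Δ(Y) under the (H×H)-action equals the (H×H)-saturation of (ε×ε)(ℸ^{G×G}(X)). -/
/-!
The `(H × H)`-saturation of the diagonal of `Y` is saturated and contains
`(ε × ε)(ℸ^{G×G}(X))`, because `ε` intertwines the actions along `ψ`. Conversely, essential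
surjectivity writes every `y : Y` as `h • ε x`, so `(y, y) = (h, h) • (ε x, ε x)` lies in the
saturation of `(ε × ε)(Δ X)`. Saturation being monotone and idempotent, each
side then contains the other.
-/

open Set MulAction Function

section Saturation

variable {G H X Y : Type*}

theorem saturation_mono [SMul G X] {S T : Set X} (hST : S ⊆ T) :
    Saturation G S ⊆ Saturation G T := by
  rintro _ ⟨g, s, hs, rfl⟩
  exact ⟨g, s, hST hs, rfl⟩

theorem image_saturation_subset [SMul G X] [SMul H Y] {f : X → Y} (φ : G → H)
    (hf : ∀ (g : G) (x : X), f (g • x) = φ g • f x) (S : Set X) :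
    f '' Saturation G S ⊆ Saturation H (f '' S) := by
  rintro _ ⟨_, ⟨g, s, hs, rfl⟩, rfl⟩
  exact ⟨φ g, f s, mem_image_of_mem f hs, hf g s⟩

variable [Monoid G] [MulAction G X]

theorem subset_saturation (S : Set X) : S ⊆ Saturation G S :=
  fun s hs => ⟨1, s, hs, (one_smul G s).symm⟩

theorem saturation_subset_saturation_of_subset {S T : Set X} (hST : S ⊆ Saturation G T) :
    Saturation G S ⊆ Saturation G T := by
  rintro _ ⟨g, s, hs, rfl⟩
  obtain ⟨g', t, ht, rfl⟩ := hST hs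
  exact ⟨g * g', t, ht, (mul_smul g g' t).symm⟩

end Saturation

theorem image_prodMap_diagonal_subset {X Y : Type*} (f : X → Y) :
    Prod.map f f '' diagonal X ⊆ diagonal Y := by
  rintro _ ⟨p, hp, rfl⟩
  exact congrArg f hp

theorem diagonal_subset_saturation_image_diagonal {H X Y : Type*} [Monoid H] [MulAction H Y]
    {ε : X → Y} (hsurj : Surjective (fun p : X × H => p.2 • ε p.1)) :
    diagonal Y ⊆ Saturation (H × H) (Prod.map ε ε '' diagonal X) := by
  refine diagonal_subset_iff.2 fun y => ?_
  obtain ⟨⟨x, h⟩, rfl⟩ := hsurj y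
  exact ⟨(h, h), (ε x, ε x), ⟨(x, x), rfl, rfl⟩, rfl⟩

/-- for an essential equivalence `ψ ⋉ ε : G ⋉ X → H ⋉ Y`, the
saturation `ℸ^{H×H}(Y)` of the diagonal of `Y` equals the `(H × H)`-saturation of
`(ε × ε)(ℸ^{G×G}(X))`. -/
theorem statement15 {G H X Y : Type*} [Group G] [Group H]
    [TopologicalSpace G] [TopologicalSpace H] [TopologicalSpace X] [TopologicalSpace Y]
    [MulAction G X] [MulAction H Y] (ψ : G →* H) (ε : X → Y)
    (hess : IsEssentialEquivalence ψ ε) :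
    Saturation (H × H) (Set.diagonal Y)
      = Saturation (H × H)
          (Prod.map ε ε '' Saturation (G × G) (Set.diagonal X)) := by
  obtain ⟨-, -, hequiv, hsurj, -, -⟩ := hess
  have hequiv₂ : ∀ (g : G × G) (p : X × X),
      Prod.map ε ε (g • p) = Prod.map ψ ψ g • Prod.map ε ε p := fun g p =>
    Prod.ext (hequiv g.1 p.1) (hequiv g.2 p.2)
  apply Subset.antisymm <;> apply saturation_subset_saturation_of_subset
  · exact (diagonal_subset_saturation_image_diagonal hsurj).trans
      (saturation_mono (image_mono (subset_saturation _)))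
  · exact (image_saturation_subset _ hequiv₂ _).trans
      (saturation_mono (image_prodMap_diagonal_subset ε))
end

section
/- Let G be a compact Lie group acting on a metrizable space X. Then for every closed normal subgroup K ⊴ G (not necessarily acting freely), cat_{G/K}(X/K) ≤ cat_G(X); consequently max over all closed normal K ⊴ G of cat((X/K)^{G/K}) ≤ cat_G(X). -/
open Set MulAction Function


section QuotAct
variable {G : Type*} [Group G] {X : Type*} [MulAction G X] (K : Subgroup G) [K.Normal]

/-- The orbit space `X/K` of the restricted action of a subgroup `K ≤ G`. -/
abbrev OrbitQuot (K : Subgroup G) (X : Type*) [MulAction G X] : Type _ :=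
  Quotient (MulAction.orbitRel K X)

def quotSMul : SMul (G ⧸ K) (OrbitQuot K X) where
  smul := fun q x => Quotient.liftOn' q
    (fun a => Quotient.map' (fun y => a • y) (by
      rintro y z ⟨k, hk⟩
      exact ⟨⟨a * (k : G) * a⁻¹, Subgroup.Normal.conj_mem ‹K.Normal› (k : G) k.2 a⟩, by
        simp only [Subgroup.mk_smul, ← hk]
        show (a * (k : G) * a⁻¹) • a • z = a • (k : G) • z
        rw [smul_smul, smul_smul]
        congr 1
        group⟩) x)
    (by
      rintro a b hab
      have hK : a⁻¹ * b ∈ K := QuotientGroup.leftRel_apply.mp hab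
      induction x using Quotient.inductionOn'
      rename_i y
      apply Quotient.sound'
      refine ⟨⟨a * (a⁻¹ * b)⁻¹ * a⁻¹, ?_⟩, ?_⟩
      · simpa using Subgroup.Normal.conj_mem ‹K.Normal› _ (K.inv_mem hK) a
      · show (a * (a⁻¹ * b)⁻¹ * a⁻¹) • (b • y) = a • y
        rw [← mul_smul]
        congr 1
        group)

/-- The induced action of the quotient group `G/K` on the orbit space `X/K`,
given by `(gK) • [x]_K = [g • x]_K`. -/
instance quotMulAction : MulAction (G ⧸ K) (OrbitQuot K X) :=
  letI := quotSMul (X := X) K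
  { one_smul := by
      intro q
      induction q using Quotient.inductionOn'
      rename_i x
      show (Quotient.mk'' ((1 : G) • x) : OrbitQuot K X) = Quotient.mk'' x
      rw [one_smul]
    mul_smul := by
      intro a b q
      induction a using Quotient.inductionOn'
      induction b using Quotient.inductionOn'
      induction q using Quotient.inductionOn'
      rename_i a b x
      show (Quotient.mk'' ((a * b) • x) : OrbitQuot K X) = Quotient.mk'' (a • b • x)
      rw [mul_smul] }

end QuotAct

/-! A `G`-homotopy compressing an open set `U ⊆ X` into an orbit `G • x` descends along the open
quotient map `X → X/K`: its value at a class does not depend on the chosen representative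
because the homotopy is `K`-equivariant, so it compresses `U/K` into the orbit of `[x]`.
On the fixed-point set of a `Γ`-space an equivariant homotopy stays among fixed points, and a
`Γ`-orbit contains at most one fixed point, so every member of a `Γ`-categorical cover becomes
compressible into a point there. -/

section OrbitQuotient

open Topology

variable {G : Type*} [Group G] {X : Type*} [MulAction G X] {K : Subgroup G}

abbrev OrbitQuot.mk (K : Subgroup G) : X → OrbitQuot K X := Quotient.mk''

namespace OrbitQuot

theorem smul_mk [K.Normal] (g : G) (x : X) : (g : G ⧸ K) • mk K x = mk K (g • x) := rfl

theorem mk_eq_mk_iff {x y : X} : mk K x = mk K y ↔ ∃ k : K, (k : G) • y = x :=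
  Quotient.eq''.trans (MulAction.orbitRel_apply.trans MulAction.mem_orbit_iff)

theorem mk_surjective : Surjective (mk K : X → OrbitQuot K X) := Quotient.mk''_surjective

theorem image_mk_orbit [K.Normal] (x : X) : mk K '' orbit G x = orbit (G ⧸ K) (mk K x) := by
  ext q
  constructor
  · rintro ⟨_, ⟨g, rfl⟩, rfl⟩
    exact ⟨g, rfl⟩
  · rintro ⟨g, rfl⟩
    obtain ⟨g, rfl⟩ := QuotientGroup.mk_surjective g
    exact ⟨g • x, mem_orbit x g, rfl⟩

theorem isOpenQuotientMap_mk [TopologicalSpace X] [ContinuousConstSMul G X] :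
    IsOpenQuotientMap (mk K : X → OrbitQuot K X) :=
  haveI : ContinuousConstSMul K X := ⟨fun k => continuous_const_smul (k : G)⟩
  MulAction.isOpenQuotientMap_quotientMk

end OrbitQuot

open OrbitQuot

theorem IsInvariantSet.image_mk [K.Normal] {U : Set X} (hU : IsInvariantSet G U) :
    IsInvariantSet (G ⧸ K) (mk K '' U) := by
  rintro g _ ⟨x, hx, rfl⟩
  obtain ⟨g, rfl⟩ := QuotientGroup.mk_surjective g
  exact ⟨g • x, hU g x hx, rfl⟩

variable [TopologicalSpace X]

theorem EqvCompressible.image_mk [K.Normal] [ContinuousConstSMul G X] {U A : Set X}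
    (hU : IsOpen U) (h : EqvCompressible G U A) :
    EqvCompressible (G ⧸ K) (mk K '' U) (mk K '' A) := by
  obtain ⟨H, hcont, h0, h1, hequiv⟩ := h
  let H' : OrbitQuot K X → unitInterval → OrbitQuot K X := fun q t => mk K (H q.out t)
  have H'_mk_smul : ∀ x ∈ U, ∀ (g : G) t, H' (mk K (g • x)) t = mk K (g • H x t) := by
    intro x hx g t
    obtain ⟨k, hk⟩ := mk_eq_mk_iff.mp (Quotient.out_eq' (mk K (g • x)))
    have hH : H ((k : G) • g • x) t = (k : G) • g • H x t := by
      rw [smul_smul, hequiv _ x hx, mul_smul]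
    simp only [H', ← hk, hH]
    exact mk_eq_mk_iff.mpr ⟨k, rfl⟩
  have H'_mk : ∀ x ∈ U, ∀ t, H' (mk K x) t = mk K (H x t) := by
    simpa only [one_smul] using fun x hx => H'_mk_smul x hx 1
  refine ⟨H', ?_, ?_, ?_, ?_⟩
  · refine continuousOn_of_forall_continuousAt ?_
    rintro ⟨_, t⟩ ⟨⟨x, hx, rfl⟩, -⟩
    have hUt : U ×ˢ univ ∈ 𝓝 (x, t) := (hU.prod isOpen_univ).mem_nhds ⟨hx, trivial⟩
    have hπ : IsOpenQuotientMap (Prod.map (mk K) id : X × unitInterval → _) :=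
      isOpenQuotientMap_mk.prodMap .id
    refine (hπ.continuousAt_comp_iff (g := fun p => H' p.1 p.2) (x := (x, t))).mp ?_
    refine (continuous_quotient_mk'.continuousAt.comp (hcont.continuousAt hUt)).congr ?_
    filter_upwards [hUt] with p hp
    exact (H'_mk p.1 hp.1 p.2).symm
  · rintro _ ⟨x, hx, rfl⟩
    rw [H'_mk x hx, h0 x hx]
  · rintro _ ⟨x, hx, rfl⟩
    rw [H'_mk x hx]
    exact mem_image_of_mem _ (h1 x hx)
  · rintro g _ ⟨x, hx, rfl⟩ t
    obtain ⟨g, rfl⟩ := QuotientGroup.mk_surjective g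
    rw [smul_mk, H'_mk_smul x hx, H'_mk x hx, smul_mk]

theorem ACatCover.orbitQuot [K.Normal] [ContinuousConstSMul G X] {𝒜 : Set (Set X)}
    {𝒜' : Set (Set (OrbitQuot K X))} (h𝒜 : ∀ A ∈ 𝒜, mk K '' A ∈ 𝒜') {n : ℕ}
    (h : ACatCover G 𝒜 n) : ACatCover (G ⧸ K) 𝒜' n := by
  obtain ⟨U, hcover, hU⟩ := h
  refine ⟨fun i => mk K '' U i, ?_, fun i => ?_⟩
  · rw [← image_iUnion, hcover, image_univ, mk_surjective.range_eq]
  obtain ⟨hopen, hinv, A, hA, hcomp⟩ := hU i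
  exact ⟨isOpenQuotientMap_mk.isOpenMap _ hopen, hinv.image_mk, _, h𝒜 A hA,
    hcomp.image_mk hopen⟩

end OrbitQuotient

theorem eqvACat_le_eqvACat {G G' X X' : Type*} [SMul G X] [SMul G' X'] [TopologicalSpace X]
    [TopologicalSpace X'] {𝒜 : Set (Set X)} {𝒜' : Set (Set X')}
    (h : ∀ n, ACatCover G 𝒜 n → ACatCover G' 𝒜' n) :
    eqvACat G' 𝒜' ≤ eqvACat G 𝒜 :=
  sInf_le_sInf fun _ ⟨n, hk, hn⟩ => ⟨n, hk, h n hn⟩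

theorem eqvCat_orbitQuot_le {G X : Type*} [Group G] [TopologicalSpace X] [MulAction G X]
    [ContinuousConstSMul G X] (K : Subgroup G) [K.Normal] :
    eqvCat (G ⧸ K) (OrbitQuot K X) ≤ eqvCat G X :=
  eqvACat_le_eqvACat fun _ => ACatCover.orbitQuot <| by
    rintro _ ⟨x, rfl⟩
    exact ⟨_, OrbitQuot.image_mk_orbit x⟩

section FixedPoints

variable {Γ Y : Type*} [Group Γ] [MulAction Γ Y]

theorem subsingleton_preimage_orbit_fixedPoints (y : Y) :
    ((↑) ⁻¹' orbit Γ y : Set (fixedPoints Γ Y)).Subsingleton := by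
  rintro ⟨z, hz⟩ (hzy : z ∈ orbit Γ y) ⟨w, -⟩ (hwy : w ∈ orbit Γ y)
  have horbit : orbit Γ z = orbit Γ y := orbit_eq_iff.mpr hzy
  exact Subtype.ext <| subsingleton_orbit_iff_mem_fixedPoints.mpr hz
    (mem_orbit_self z) (horbit ▸ hwy)

variable [TopologicalSpace Y]

theorem EqvCompressible.compressible_fixedPoints {U A : Set Y} (h : EqvCompressible Γ U A) :
    Compressible ((↑) ⁻¹' U : Set (fixedPoints Γ Y)) ((↑) ⁻¹' A) := by
  classical
  obtain ⟨H, hcont, h0, h1, hequiv⟩ := h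
  have hfix : ∀ z : fixedPoints Γ Y, (z : Y) ∈ U → ∀ t, H z t ∈ fixedPoints Γ Y :=
    fun z hz t g => by rw [← hequiv g z hz t, z.2 g]
  let H' : fixedPoints Γ Y → unitInterval → fixedPoints Γ Y :=
    fun z t => if hz : (z : Y) ∈ U then ⟨H z t, hfix z hz t⟩ else z
  have H'_val : ∀ z : fixedPoints Γ Y, (z : Y) ∈ U → ∀ t, (H' z t : Y) = H z t :=
    fun z hz t => by simp only [H', dif_pos hz]
  refine ⟨H', ?_, fun z hz => Subtype.ext ((H'_val z hz 0).trans (h0 z hz)),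
    fun z hz => show (H' z 1 : Y) ∈ A from (H'_val z hz 1).symm ▸ h1 z hz⟩
  rw [Topology.IsInducing.subtypeVal.continuousOn_iff]
  refine (hcont.comp (continuous_subtype_val.prodMap continuous_id).continuousOn
    fun p hp => ⟨hp.1, trivial⟩).congr ?_
  rintro ⟨z, t⟩ ⟨hz, -⟩
  exact H'_val z hz t

theorem ACatCover.plainACatCover_fixedPoints [Nonempty (fixedPoints Γ Y)] {n : ℕ}
    (h : ACatCover Γ {A : Set Y | ∃ y, A = orbit Γ y} n) :
    PlainACatCover {A : Set (fixedPoints Γ Y) | ∃ a, A = {a}} n := by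
  obtain ⟨U, hcover, hU⟩ := h
  refine ⟨fun i => (↑) ⁻¹' U i, by rw [← preimage_iUnion, hcover, preimage_univ],
    fun i => ?_⟩
  obtain ⟨hopen, -, _, ⟨y, rfl⟩, hcomp⟩ := hU i
  obtain ⟨a, ha⟩ : ∃ a, ((↑) ⁻¹' orbit Γ y : Set (fixedPoints Γ Y)) ⊆ {a} := by
    rcases (subsingleton_preimage_orbit_fixedPoints (Γ := Γ) y).eq_empty_or_singleton
      with hempty | ⟨a, hsingleton⟩
    · exact ⟨Classical.arbitrary _, hempty ▸ empty_subset _⟩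
    · exact ⟨a, hsingleton.subset⟩
  obtain ⟨H, hcont, h0, h1⟩ := hcomp.compressible_fixedPoints
  exact ⟨hopen.preimage continuous_subtype_val, _, ⟨a, rfl⟩, H, hcont, h0,
    fun z hz => ha (h1 z hz)⟩

theorem LScat_fixedPoints_le_eqvCat : LScat (fixedPoints Γ Y) ≤ eqvCat Γ Y := by
  rcases isEmpty_or_nonempty (fixedPoints Γ Y) with hF | hF
  · refine le_trans (sInf_le ?_) zero_le
    exact ⟨0, rfl, fun i => i.elim0, eq_univ_of_forall isEmptyElim, fun i => i.elim0⟩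
  · exact sInf_le_sInf fun _ ⟨n, hk, hn⟩ => ⟨n, hk, hn.plainACatCover_fixedPoints⟩

end FixedPoints

theorem statement16_general {G : Type*} [Group G] [TopologicalSpace G]
    {X : Type*} [TopologicalSpace X]
    [MulAction G X] [ContinuousSMul G X] :
    ∀ (K : Subgroup G) (_hn : K.Normal), IsClosed (K : Set G) →
      eqvCat (G ⧸ K) (OrbitQuot K X) ≤ eqvCat G X ∧
      LScat (MulAction.fixedPoints (G ⧸ K) (OrbitQuot K X)) ≤ eqvCat G X := by
  intro K _ _
  have hquot : eqvCat (G ⧸ K) (OrbitQuot K X) ≤ eqvCat G X := eqvCat_orbitQuot_le K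
  exact ⟨hquot, LScat_fixedPoints_le_eqvCat.trans hquot⟩

/-- for a compact Lie group `G` acting on a metrizable space `X` and
every closed normal subgroup `K ⊴ G`, `cat_{G/K}(X/K) ≤ cat_G(X)`, and consequently
`cat((X/K)^{G/K}) ≤ cat_G(X)` for every such `K`. -/
theorem statement16 {G : Type*} [Group G] [TopologicalSpace G] [IsTopologicalGroup G]
    [CompactSpace G] {X : Type*} [TopologicalSpace X] [TopologicalSpace.MetrizableSpace X]
    [MulAction G X] [ContinuousSMul G X] :
    ∀ (K : Subgroup G) (_hn : K.Normal), IsClosed (K : Set G) →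
      eqvCat (G ⧸ K) (OrbitQuot K X) ≤ eqvCat G X ∧
      LScat (MulAction.fixedPoints (G ⧸ K) (OrbitQuot K X)) ≤ eqvCat G X :=
  statement16_general
end

section
/- For a G-space X and every n ≥ 2, max{TC_n(X^G), TC_n(X/G)} ≤ TC^{G,n}(X), where TC^{G,n}(X) = _{ℸ_n(X)}cat_{Gⁿ}(Xⁿ) is the n-th higher invariant topological complexity; moreover for every closed normal subgroup K ⊴ G, TC_n((X/K)^{G/K}) ≤ TC^{G,n}(X). -/
open Set MulAction Function


/-- The `n`-fold diagonal `Δ_n(Z) ⊆ Zⁿ`. -/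
def higherDiagonal (n : ℕ) (Z : Type*) : Set (Fin n → Z) :=
  {f | ∃ z : Z, f = fun _ => z}

/-- Rudyak's `n`-th higher topological complexity `TC_n(Z) = _{Δ_n(Z)}cat(Zⁿ)`. -/
noncomputable def higherTC (n : ℕ) (Z : Type*) [TopologicalSpace Z] : ℕ∞ :=
  plainACat (X := Fin n → Z) {higherDiagonal n Z}

/-- The `n`-th higher invariant topological complexity
`TC^{G,n}(X) = _{ℸ_n(X)}cat_{Gⁿ}(Xⁿ)`. -/
noncomputable def higherInvTC (G : Type*) (X : Type*) [Group G] [MulAction G X]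
    [TopologicalSpace X] (n : ℕ) : ℕ∞ :=
  eqvACat (Fin n → G) (X := Fin n → X)
    {Saturation (Fin n → G) (higherDiagonal n X)}

section Helpers

/-- Generic continuity of a descended homotopy along an open map with a section. -/
lemma descent_continuousOn {X Q : Type*} [TopologicalSpace X] [TopologicalSpace Q]
    {q : X → Q} (hq : IsOpenMap q) (hqc : Continuous q)
    {σ : Q → X} (hσ : ∀ y, q (σ y) = y)
    {U : Set X} (hUo : IsOpen U)
    {H : X → unitInterval → X}
    (hHc : ContinuousOn (fun p : X × unitInterval => H p.1 p.2) (U ×ˢ Set.univ))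
    (hsat : ∀ x ∈ U, ∀ x', q x' = q x → x' ∈ U)
    (hcompat : ∀ x ∈ U, ∀ x', q x' = q x → ∀ t, q (H x' t) = q (H x t)) :
    ContinuousOn (fun p : Q × unitInterval => q (H (σ p.1) p.2)) ((q '' U) ×ˢ Set.univ) := by
  apply continuousOn_of_forall_continuousAt
  rintro ⟨y₀, t₀⟩ ⟨⟨x₀, hx₀U, rfl⟩, -⟩
  have hσ₀ : σ (q x₀) ∈ U := hsat x₀ hx₀U _ (hσ _)
  rw [continuousAt_def]
  intro A hA
  obtain ⟨W, hWA, hWo, hfW⟩ := mem_nhds_iff.mp hA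
  have hFc : ContinuousOn (fun p : X × unitInterval => q (H p.1 p.2)) (U ×ˢ Set.univ) :=
    hqc.comp_continuousOn hHc
  have hSo : IsOpen ((U ×ˢ (Set.univ : Set unitInterval)) ∩
      (fun p : X × unitInterval => q (H p.1 p.2)) ⁻¹' W) :=
    hFc.isOpen_inter_preimage (hUo.prod isOpen_univ) hWo
  have hTo : IsOpen ((Prod.map q id) '' ((U ×ˢ Set.univ) ∩
      (fun p : X × unitInterval => q (H p.1 p.2)) ⁻¹' W)) :=
    (hq.prodMap IsOpenMap.id) _ hSo
  have hmem : (q x₀, t₀) ∈ (Prod.map q id) '' ((U ×ˢ Set.univ) ∩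
      (fun p : X × unitInterval => q (H p.1 p.2)) ⁻¹' W) := by
    refine ⟨(σ (q x₀), t₀), ⟨⟨hσ₀, trivial⟩, hfW⟩, ?_⟩
    simp [Prod.map, hσ]
  refine Filter.mem_of_superset (hTo.mem_nhds hmem) ?_
  rintro ⟨y, t⟩ ⟨⟨x, t'⟩, ⟨⟨hxU, -⟩, hxW⟩, heq⟩
  obtain ⟨rfl, rfl⟩ : q x = y ∧ t' = t := by
    simpa [Prod.map, Prod.ext_iff] using heq
  have hc : q (H (σ (q x)) t') = q (H x t') := hcompat x hxU _ (hσ _) t'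
  exact hWA (by simpa [hc] using hxW)

end Helpers
section QuotCover

variable {G X : Type*} [Group G] [MulAction G X] [TopologicalSpace X]
  [ContinuousConstSMul G X] {n k : ℕ}

lemma cover_to_quot
    (h : ACatCover (Fin n → G) (X := Fin n → X)
      {Saturation (Fin n → G) (higherDiagonal n X)} k) :
    PlainACatCover (X := Fin n → Quotient (MulAction.orbitRel G X))
      {higherDiagonal n (Quotient (MulAction.orbitRel G X))} k := by
  classical
  obtain ⟨U, hUcov, hU⟩ := h
  set Q := Quotient (MulAction.orbitRel G X) with hQ
  set q : X → Q := Quotient.mk'' with hq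
  set qn : (Fin n → X) → (Fin n → Q) := fun f i => q (f i) with hqn
  have hqsmul : ∀ (g : G) (x : X), q (g • x) = q x := fun g x =>
    Quotient.sound' (MulAction.orbitRel_apply.mpr (MulAction.mem_orbit x g))
  have hrel : ∀ x x' : Fin n → X, qn x' = qn x → ∃ g : Fin n → G, g • x = x' := by
    intro x x' hxx
    have : ∀ i, ∃ g : G, g • x i = x' i := by
      intro i
      have := congrFun hxx i
      obtain ⟨g, hg⟩ := MulAction.orbitRel_apply.mp (Quotient.exact' this)
      exact ⟨g, hg⟩
    choose g hg using this
    exact ⟨g, funext hg⟩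
  have hqo : IsOpenMap qn := by
    have : IsOpenMap (Pi.map (fun _ : Fin n => q)) :=
      IsOpenMap.piMap (fun _ => isOpenMap_quotient_mk'_mul)
        (Filter.Eventually.of_forall fun _ y => ⟨y.out, Quotient.out_eq' y⟩)
    exact this
  have hqc : Continuous qn :=
    continuous_pi fun i => continuous_quotient_mk'.comp (continuous_apply i)
  set σn : (Fin n → Q) → (Fin n → X) := fun y i => (y i).out with hσdef
  have hσ : ∀ y, qn (σn y) = y := fun y => funext fun i => Quotient.out_eq' (y i)
  refine ⟨fun i => qn '' U i, ?_, ?_⟩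
  · apply Set.eq_univ_iff_forall.mpr
    intro y
    have : σn y ∈ ⋃ i, U i := hUcov ▸ Set.mem_univ _
    obtain ⟨i, hi⟩ := Set.mem_iUnion.mp this
    exact Set.mem_iUnion.mpr ⟨i, σn y, hi, hσ y⟩
  · intro i
    obtain ⟨hUo, hUinv, A, hA, H, hHc, hH0, hH1, hHeq⟩ := hU i
    rw [Set.mem_singleton_iff] at hA
    subst hA
    have hsat : ∀ x ∈ U i, ∀ x', qn x' = qn x → x' ∈ U i := by
      intro x hx x' hxx
      obtain ⟨g, rfl⟩ := hrel x x' hxx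
      exact hUinv g x hx
    have hcompat : ∀ x ∈ U i, ∀ x', qn x' = qn x → ∀ t, qn (H x' t) = qn (H x t) := by
      intro x hx x' hxx t
      obtain ⟨g, rfl⟩ := hrel x x' hxx
      rw [hHeq g x hx t]
      exact funext fun j => hqsmul (g j) _
    refine ⟨hqo _ hUo, higherDiagonal n Q, rfl, fun y t => qn (H (σn y) t), ?_, ?_, ?_⟩
    · exact descent_continuousOn hqo hqc hσ hUo hHc hsat hcompat
    · rintro y ⟨x, hx, rfl⟩
      have hmem : σn (qn x) ∈ U i := hsat x hx _ (hσ _)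
      show qn (H (σn (qn x)) 0) = qn x
      rw [hH0 _ hmem, hσ]
    · rintro y ⟨x, hx, rfl⟩
      have hmem : σn (qn x) ∈ U i := hsat x hx _ (hσ _)
      obtain ⟨g, s, ⟨z, rfl⟩, hgs⟩ := hH1 _ hmem
      show qn (H (σn (qn x)) 1) ∈ _
      refine ⟨q z, funext fun j => ?_⟩
      show q (H (σn (qn x)) 1 j) = q z
      rw [hgs]
      exact hqsmul (g j) z

end QuotCover
section FixedCover

open Topology in
lemma cover_to_fixed {Γ Y : Type*} [Group Γ] [MulAction Γ Y] [TopologicalSpace Y] {n k : ℕ}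
    (hn : 2 ≤ n)
    (h : ACatCover (Fin n → Γ) (X := Fin n → Y)
      {Saturation (Fin n → Γ) (higherDiagonal n Y)} k) :
    PlainACatCover (X := Fin n → ↥(MulAction.fixedPoints Γ Y))
      {higherDiagonal n ↥(MulAction.fixedPoints Γ Y)} k := by
  classical
  obtain ⟨U, hUcov, hU⟩ := h
  set S := MulAction.fixedPoints Γ Y with hS
  set ι : (Fin n → ↥S) → (Fin n → Y) := fun f i => (f i : Y) with hι
  have hιc : Continuous ι :=
    continuous_pi fun i => continuous_subtype_val.comp (continuous_apply i)
  refine ⟨fun i => ι ⁻¹' U i, ?_, ?_⟩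
  · apply Set.eq_univ_iff_forall.mpr; intro f
    have : ι f ∈ ⋃ i, U i := hUcov ▸ Set.mem_univ _
    obtain ⟨i, hi⟩ := Set.mem_iUnion.mp this
    exact Set.mem_iUnion.mpr ⟨i, hi⟩
  · intro i
    obtain ⟨hUo, hUinv, A, hA, H, hHc, hH0, hH1, hHeq⟩ := hU i
    rw [Set.mem_singleton_iff] at hA; subst hA
    have hfix : ∀ f : Fin n → ↥S, ι f ∈ U i → ∀ t j, H (ι f) t j ∈ S := by
      intro f hf t j
      apply MulAction.mem_fixedPoints.mpr
      intro γ
      have hconst : (fun _ : Fin n => γ) • ι f = ι f :=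
        funext fun j' => MulAction.mem_fixedPoints.mp (f j').2 γ
      have := hHeq (fun _ => γ) (ι f) hf t
      rw [hconst] at this
      exact (congrFun this j).symm
    refine ⟨hιc.isOpen_preimage _ hUo,
      higherDiagonal n ↥S, rfl,
      fun f t => if hf : ι f ∈ U i then (fun j => ⟨H (ι f) t j, hfix f hf t j⟩) else f,
      ?_, ?_, ?_⟩
    · rw [continuousOn_pi]
      intro j
      rw [IsInducing.subtypeVal.continuousOn_iff]
      have hg : ContinuousOn
          (fun p : (Fin n → ↥S) × unitInterval => H (ι p.1) p.2 j)
          ((ι ⁻¹' U i) ×ˢ Set.univ) := by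
        have hcomp : ContinuousOn
            (fun p : (Fin n → ↥S) × unitInterval => H (ι p.1) p.2)
            ((ι ⁻¹' U i) ×ˢ Set.univ) := by
          apply hHc.comp ((hιc.comp continuous_fst).prodMk continuous_snd).continuousOn
          rintro ⟨f, t⟩ ⟨hf, -⟩
          exact ⟨hf, trivial⟩
        exact (continuous_apply j).comp_continuousOn hcomp
      apply hg.congr
      rintro ⟨f, t⟩ ⟨hf, -⟩
      have hf' : ι f ∈ U i := hf
      simp only [Function.comp_apply, dif_pos hf']
    · intro f hf
      have hf' : ι f ∈ U i := hf
      funext j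
      simp only [hf', dif_pos]
      exact Subtype.ext (congrFun (hH0 (ι f) hf') j)
    · intro f hf
      have hf' : ι f ∈ U i := hf
      obtain ⟨g, s', ⟨z, rfl⟩, hgs⟩ := hH1 (ι f) hf'
      have j₀ : Fin n := ⟨0, by omega⟩
      have hcoord : ∀ j, H (ι f) 1 j = g j • z := fun j => congrFun hgs j
      have hw : g j₀ • z ∈ S := hcoord j₀ ▸ hfix f hf' 1 j₀
      have hzz : z = g j₀ • z := by
        have h1 := MulAction.mem_fixedPoints.mp hw (g j₀)⁻¹
        rw [inv_smul_smul] at h1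
        exact h1
      have hz : z ∈ S := by rw [hzz]; exact hw
      refine ⟨⟨z, hz⟩, funext fun j => ?_⟩
      simp only [hf', dif_pos]
      refine Subtype.ext ?_
      show H (ι f) 1 j = z
      rw [hcoord j]
      exact MulAction.mem_fixedPoints.mp hz (g j)

end FixedCover
section EqvQuotCover

variable {G X : Type*} [Group G] [MulAction G X] [TopologicalSpace X]
  [ContinuousConstSMul G X] (K : Subgroup G) [K.Normal] {n k : ℕ}

lemma cover_to_eqv_quot
    (h : ACatCover (Fin n → G) (X := Fin n → X)
      {Saturation (Fin n → G) (higherDiagonal n X)} k) :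
    ACatCover (Fin n → G ⧸ K) (X := Fin n → OrbitQuot K X)
      {Saturation (Fin n → G ⧸ K) (higherDiagonal n (OrbitQuot K X))} k := by
  classical
  haveI : ContinuousConstSMul ↥K X :=
    ⟨fun κ => show Continuous fun x : X => (κ : G) • x from continuous_const_smul _⟩
  obtain ⟨U, hUcov, hU⟩ := h
  set Q := OrbitQuot K X with hQdef
  set q : X → Q := Quotient.mk'' with hq
  set qn : (Fin n → X) → (Fin n → Q) := fun f i => q (f i) with hqn
  have hqK : ∀ (κ : ↥K) (x : X), q ((κ : G) • x) = q x := fun κ x =>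
    Quotient.sound' (MulAction.orbitRel_apply.mpr (MulAction.mem_orbit x κ))
  have hsmul_mk : ∀ (g : G) (x : X),
      ((g : G ⧸ K) • (q x) : Q) = q (g • x) := fun g x => rfl
  have hrelK : ∀ x x' : Fin n → X, qn x' = qn x →
      ∃ κ : Fin n → ↥K, (fun i => (κ i : G)) • x = x' := by
    intro x x' hxx
    have : ∀ i, ∃ κ : ↥K, (κ : G) • x i = x' i := by
      intro i
      have := congrFun hxx i
      obtain ⟨κ, hκ⟩ := MulAction.orbitRel_apply.mp (Quotient.exact' this)
      exact ⟨κ, hκ⟩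
    choose κ hκ using this
    exact ⟨κ, funext hκ⟩
  have hqo : IsOpenMap qn := by
    have : IsOpenMap (Pi.map (fun _ : Fin n => q)) :=
      IsOpenMap.piMap (fun _ => isOpenMap_quotient_mk'_mul)
        (Filter.Eventually.of_forall fun _ y => ⟨y.out, Quotient.out_eq' y⟩)
    exact this
  have hqc : Continuous qn :=
    continuous_pi fun i => continuous_quotient_mk'.comp (continuous_apply i)
  set σn : (Fin n → Q) → (Fin n → X) := fun y i => (y i).out with hσdef
  have hσ : ∀ y, qn (σn y) = y := fun y => funext fun i => Quotient.out_eq' (y i)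
  have hq_g : ∀ (x : Fin n → X) (g : Fin n → G),
      qn (g • x) = (fun i => ((g i : G) : G ⧸ K)) • qn x :=
    fun x g => funext fun i => (hsmul_mk (g i) (x i)).symm
  have hout : ∀ gb : Fin n → G ⧸ K,
      (fun i => (((gb i).out : G) : G ⧸ K)) = gb :=
    fun gb => funext fun i => QuotientGroup.out_eq' (gb i)
  refine ⟨fun i => qn '' U i, ?_, ?_⟩
  · apply Set.eq_univ_iff_forall.mpr
    intro y
    have : σn y ∈ ⋃ i, U i := hUcov ▸ Set.mem_univ _
    obtain ⟨i, hi⟩ := Set.mem_iUnion.mp this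
    exact Set.mem_iUnion.mpr ⟨i, σn y, hi, hσ y⟩
  · intro i
    obtain ⟨hUo, hUinv, A, hA, H, hHc, hH0, hH1, hHeq⟩ := hU i
    rw [Set.mem_singleton_iff] at hA
    subst hA
    have hsat : ∀ x ∈ U i, ∀ x', qn x' = qn x → x' ∈ U i := by
      intro x hx x' hxx
      obtain ⟨κ, rfl⟩ := hrelK x x' hxx
      exact hUinv _ x hx
    have hcompat : ∀ x ∈ U i, ∀ x', qn x' = qn x → ∀ t, qn (H x' t) = qn (H x t) := by
      intro x hx x' hxx t
      obtain ⟨κ, rfl⟩ := hrelK x x' hxx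
      rw [hHeq _ x hx t]
      exact funext fun j => hqK (κ j) _
    refine ⟨hqo _ hUo, ?_, Saturation (Fin n → G ⧸ K) (higherDiagonal n Q), rfl,
      fun y t => qn (H (σn y) t), ?_, ?_, ?_, ?_⟩
    · -- invariance
      rintro gb y ⟨x, hx, rfl⟩
      refine ⟨(fun i => ((gb i).out : G)) • x, hUinv _ x hx, ?_⟩
      rw [hq_g, hout]
    · exact descent_continuousOn hqo hqc hσ hUo hHc hsat hcompat
    · rintro y ⟨x, hx, rfl⟩
      have hmem : σn (qn x) ∈ U i := hsat x hx _ (hσ _)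
      show qn (H (σn (qn x)) 0) = qn x
      rw [hH0 _ hmem, hσ]
    · rintro y ⟨x, hx, rfl⟩
      have hmem : σn (qn x) ∈ U i := hsat x hx _ (hσ _)
      obtain ⟨g, s, ⟨z, rfl⟩, hgs⟩ := hH1 _ hmem
      show qn (H (σn (qn x)) 1) ∈ _
      refine ⟨fun i => ((g i : G) : G ⧸ K), fun _ => q z, ⟨q z, rfl⟩, ?_⟩
      rw [hgs, hq_g]
    · -- equivariance
      rintro gb y ⟨x, hx, rfl⟩ t
      show qn (H (σn (gb • qn x)) t) = gb • qn (H (σn (qn x)) t)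
      have h1 : gb • qn x = qn ((fun i => ((gb i).out : G)) • x) := by
        rw [hq_g, hout]
      have hgx : (fun i => ((gb i).out : G)) • x ∈ U i := hUinv _ x hx
      rw [h1, hcompat _ hgx _ (hσ _) t, hcompat x hx _ (hσ _) t,
        hHeq _ x hx t, hq_g, hout]

end EqvQuotCover
/-- `max{TC_n(X^G), TC_n(X/G)} ≤ TC^{G,n}(X)` for all `n ≥ 2`, and for
every closed normal subgroup `K ⊴ G`, `TC_n((X/K)^{G/K}) ≤ TC^{G,n}(X)`. -/
theorem statement19 {G : Type*} [Group G] [TopologicalSpace G] [IsTopologicalGroup G]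
    [CompactSpace G] {X : Type*} [TopologicalSpace X] [TopologicalSpace.MetrizableSpace X]
    [MulAction G X] [ContinuousSMul G X] (n : ℕ) (hn : 2 ≤ n) :
    max (higherTC n (MulAction.fixedPoints G X))
        (higherTC n (Quotient (MulAction.orbitRel G X))) ≤ higherInvTC G X n ∧
    ∀ (K : Subgroup G) (_hn : K.Normal), IsClosed (K : Set G) →
      higherTC n (MulAction.fixedPoints (G ⧸ K) (OrbitQuot K X)) ≤ higherInvTC G X n := by
  constructor
  · apply max_le
    · unfold higherTC plainACat higherInvTC eqvACat
      apply sInf_le_sInf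
      rintro k ⟨m, rfl, hm⟩
      exact ⟨m, rfl, cover_to_fixed hn hm⟩
    · unfold higherTC plainACat higherInvTC eqvACat
      apply sInf_le_sInf
      rintro k ⟨m, rfl, hm⟩
      exact ⟨m, rfl, cover_to_quot hm⟩
  · intro K hK _
    haveI := hK
    unfold higherTC plainACat higherInvTC eqvACat
    apply sInf_le_sInf
    rintro k ⟨m, rfl, hm⟩
    exact ⟨m, rfl, cover_to_fixed hn (cover_to_eqv_quot K hm)⟩
end
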